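/- For tanh(r) ≤ 1/2, the hyperbolic area of the region {z ∈ Ω : d(z, iℝ₊) ≤ r}, where Ω is the standard fundamental domain of SL(2,ℤ), equals 2 arctan(sinh r) + 2 sinh(r) · log(1/(2 tanh r)). -/

import Mathlib

/-!
In coordinates `z = x + iy` the cone is the wedge `|x| ≤ y sinh r`, so `Ω ∩ cone r` is the region
above the graph of `max (√(1 - x²)) (|x| / sinh r)` over `-1/2 < x ≤ 1/2`. Integrating `1 / y²` in
`y` first leaves `∫ dx / max (√(1 - x²)) (|x| / sinh r)`. The two branches cross at
`|x| = tanh r ≤ 1/2`: the unit circle contributes `2 arcsin (tanh r) = 2 arctan (sinh r)` and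
the two sides of the wedge contribute
`2 ∫_{tanh r}^{1/2} sinh r dx / x = 2 sinh r log (1 / (2 tanh r))`.
-/

open MeasureTheory

/-- The standard fundamental domain for `SL(2, ℤ)` acting on the upper half-plane. -/
def Omega : Set ℂ :=
  {z : ℂ | 0 < z.im ∧ 1 ≤ ‖z‖ ∧ -(1 / 2) < z.re ∧ z.re ≤ 1 / 2}

/-- The cone of points at hyperbolic distance at most `r` from the imaginary axis. -/
def cone (r : ℝ) : Set ℂ :=
  {z : ℂ | 0 < z.im ∧ |Complex.arg z - Real.pi / 2| ≤ Real.arcsin (Real.tanh r)}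

open Real Set

lemma integrableOn_Ici_one_div_sq {c : ℝ} (hc : 0 < c) :
    IntegrableOn (fun y : ℝ => 1 / y ^ 2) (Ici c) := by
  rw [integrableOn_Ici_iff_integrableOn_Ioi]
  refine (integrableOn_Ioi_rpow_of_lt (by norm_num : (-2 : ℝ) < -1) hc).congr_fun
    (fun y hy => ?_) measurableSet_Ioi
  simp [rpow_neg (hc.trans hy).le]

lemma integral_Ici_one_div_sq {c : ℝ} (hc : 0 < c) : ∫ y in Ici c, 1 / y ^ 2 = 1 / c := by
  rw [integral_Ici_eq_integral_Ioi,
    setIntegral_congr_fun measurableSet_Ioi (g := fun y => y ^ (-2 : ℝ))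
      (fun y hy => by simp [rpow_neg (hc.trans hy).le]),
    integral_Ioi_rpow_of_lt (by norm_num) hc]
  norm_num [rpow_neg_one]

lemma integral_indicator_epigraph_one_div_sq {g : ℝ → ℝ} {x : ℝ} (hx : 0 < g x) :
    ∫ y, ({p : ℝ × ℝ | g p.1 ≤ p.2}.indicator fun p => 1 / p.2 ^ 2) (x, y) = 1 / g x := by
  change ∫ y, (Ici (g x)).indicator (fun y => 1 / y ^ 2) y = _
  rw [integral_indicator measurableSet_Ici, integral_Ici_one_div_sq hx]

lemma integrableOn_prod_epigraph_one_div_sq {s : Set ℝ} {g : ℝ → ℝ} (hs : MeasurableSet s)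
    (hg : Measurable g) (hpos : ∀ x ∈ s, 0 < g x) (hint : IntegrableOn (fun x => 1 / g x) s) :
    IntegrableOn ({p : ℝ × ℝ | g p.1 ≤ p.2}.indicator fun p => 1 / p.2 ^ 2) (s ×ˢ univ) := by
  have hmeas : Measurable ({p : ℝ × ℝ | g p.1 ≤ p.2}.indicator fun p => 1 / p.2 ^ 2) :=
    (measurable_const.div (measurable_snd.pow_const 2)).indicator
      (measurableSet_le (hg.comp measurable_fst) measurable_snd)
  rw [IntegrableOn, Measure.volume_eq_prod, ← Measure.prod_restrict, Measure.restrict_univ,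
    integrable_prod_iff hmeas.aestronglyMeasurable]
  refine ⟨ae_restrict_of_forall_mem hs fun x hx => ?_, hint.congr ?_⟩
  · exact (integrable_indicator_iff measurableSet_Ici).2 (integrableOn_Ici_one_div_sq (hpos x hx))
  · refine ae_restrict_of_forall_mem hs fun x hx => ?_
    simp only [norm_indicator_eq_indicator_norm, norm_div, norm_one, norm_pow, norm_eq_abs, sq_abs]
    exact (integral_indicator_epigraph_one_div_sq (hpos x hx)).symm

theorem setIntegral_one_div_im_sq_epigraph {s : Set ℝ} {g : ℝ → ℝ} (hs : MeasurableSet s)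
    (hg : Measurable g) (hpos : ∀ x ∈ s, 0 < g x) (hint : IntegrableOn (fun x => 1 / g x) s) :
    ∫ z in {z : ℂ | z.re ∈ s ∧ g z.re ≤ z.im}, 1 / z.im ^ 2 = ∫ x in s, 1 / g x := by
  have hpre : Complex.measurableEquivRealProd.symm ⁻¹' {z : ℂ | z.re ∈ s ∧ g z.re ≤ z.im} =
      s ×ˢ univ ∩ {p : ℝ × ℝ | g p.1 ≤ p.2} := by
    ext p; simp
  rw [← (Complex.volume_preserving_equiv_real_prod.symm _).setIntegral_preimage_emb
    Complex.measurableEquivRealProd.symm.measurableEmbedding, hpre]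
  change ∫ p : ℝ × ℝ in _, 1 / p.2 ^ 2 = _
  rw [← setIntegral_indicator (measurableSet_le (hg.comp measurable_fst) measurable_snd :
      MeasurableSet {p : ℝ × ℝ | g p.1 ≤ p.2}),
    Measure.volume_eq_prod, setIntegral_prod _
      (integrableOn_prod_epigraph_one_div_sq hs hg hpos hint), Measure.restrict_univ]
  exact setIntegral_congr_fun hs fun x hx => integral_indicator_epigraph_one_div_sq (hpos x hx)

lemma abs_arcsin (x : ℝ) : |arcsin x| = arcsin |x| := by
  rcases le_total 0 x with hx | hx
  · rw [abs_of_nonneg hx, abs_of_nonneg (arcsin_nonneg.2 hx)]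
  · rw [abs_of_nonpos hx, abs_of_nonpos (arcsin_nonpos.2 hx), arcsin_neg]

lemma Complex.abs_arg_sub_pi_div_two {z : ℂ} (hz : 0 < z.im) :
    |Complex.arg z - π / 2| = arcsin (|z.re| / ‖z‖) := by
  rw [Complex.arg_of_im_pos hz, arccos_eq_pi_div_two_sub_arcsin, sub_sub_cancel_left, abs_neg,
    abs_arcsin, abs_div, abs_norm]

lemma le_tanh_iff_sq_le {x r : ℝ} (hr : 0 ≤ r) (hx : 0 ≤ x) :
    x ≤ tanh r ↔ x ^ 2 ≤ (1 - x ^ 2) * sinh r ^ 2 := by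
  have hsinh : 0 ≤ sinh r := sinh_nonneg_iff.2 hr
  rw [tanh_eq_sinh_div_cosh, le_div_iff₀ (cosh_pos r),
    ← pow_le_pow_iff_left₀ (by positivity) hsinh two_ne_zero, mul_pow, cosh_sq']
  constructor <;> intro h <;> nlinarith

lemma tanh_le_iff_le_sq {x r : ℝ} (hr : 0 ≤ r) (hx : 0 ≤ x) :
    tanh r ≤ x ↔ (1 - x ^ 2) * sinh r ^ 2 ≤ x ^ 2 := by
  have hsinh : 0 ≤ sinh r := sinh_nonneg_iff.2 hr
  rw [tanh_eq_sinh_div_cosh, div_le_iff₀ (cosh_pos r),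
    ← pow_le_pow_iff_left₀ hsinh (by positivity) two_ne_zero, mul_pow, cosh_sq']
  constructor <;> intro h <;> nlinarith

lemma mem_cone_iff {r : ℝ} (hr : 0 ≤ r) {z : ℂ} :
    z ∈ cone r ↔ 0 < z.im ∧ |z.re| ≤ z.im * sinh r := by
  refine and_congr_right fun hz => ?_
  have hnorm : 0 < ‖z‖ := norm_pos_iff.2 fun h => by simp [h] at hz
  have hnormSq : ‖z‖ ^ 2 = z.re ^ 2 + z.im ^ 2 := by
    rw [Complex.sq_norm, Complex.normSq_apply]; ring
  rw [Complex.abs_arg_sub_pi_div_two hz,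
    strictMonoOn_arcsin.le_iff_le ⟨(by norm_num : (-1 : ℝ) ≤ 0).trans (by positivity), by
      simpa [abs_div] using Complex.abs_re_div_norm_le_one z⟩
      ⟨(neg_one_lt_tanh r).le, (tanh_lt_one r).le⟩,
    le_tanh_iff_sq_le hr (by positivity), div_pow, sq_abs,
    show (1 - z.re ^ 2 / ‖z‖ ^ 2) * sinh r ^ 2 = (z.im * sinh r) ^ 2 / ‖z‖ ^ 2 by
      field_simp; rw [hnormSq]; ring,
    div_le_div_iff_of_pos_right (by positivity), ← sq_abs z.re]
  exact sq_le_sq₀ (abs_nonneg _) (mul_nonneg hz.le (sinh_nonneg_iff.2 hr))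

lemma Complex.one_le_norm_iff_sqrt_one_sub_re_sq_le_im {z : ℂ} (hz : 0 ≤ z.im) :
    1 ≤ ‖z‖ ↔ √(1 - z.re ^ 2) ≤ z.im := by
  rw [sqrt_le_iff, ← one_le_sq_iff₀ (norm_nonneg z), Complex.sq_norm, Complex.normSq_apply]
  constructor
  · intro h; exact ⟨hz, by nlinarith⟩
  · rintro ⟨-, h⟩; nlinarith

noncomputable def omegaConeFloor (r x : ℝ) : ℝ := max √(1 - x ^ 2) (|x| / sinh r)

lemma omegaConeFloor_neg (r x : ℝ) : omegaConeFloor r (-x) = omegaConeFloor r x := by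
  simp [omegaConeFloor]

lemma omegaConeFloor_pos {r : ℝ} (hr : 0 < r) (x : ℝ) : 0 < omegaConeFloor r x := by
  rcases lt_or_ge |x| 1 with hx | hx
  · exact lt_max_of_lt_left (sqrt_pos.2 (by nlinarith [sq_abs x, abs_nonneg x]))
  · exact lt_max_of_lt_right (div_pos (by linarith) (sinh_pos_iff.2 hr))

lemma continuous_omegaConeFloor (r : ℝ) : Continuous (omegaConeFloor r) := by
  unfold omegaConeFloor; fun_prop

lemma continuous_one_div_omegaConeFloor {r : ℝ} (hr : 0 < r) :
    Continuous fun x => 1 / omegaConeFloor r x :=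
  continuous_const.div (continuous_omegaConeFloor r) fun x => (omegaConeFloor_pos hr x).ne'

lemma omegaConeFloor_of_abs_le_tanh {r x : ℝ} (hr : 0 < r) (hx : |x| ≤ tanh r) :
    omegaConeFloor r x = √(1 - x ^ 2) := by
  have hx1 : 0 ≤ 1 - x ^ 2 := by nlinarith [sq_abs x, abs_nonneg x, tanh_lt_one r]
  refine max_eq_left ?_
  rw [le_sqrt (by positivity) hx1, div_pow, sq_abs, div_le_iff₀ (by positivity)]
  simpa only [sq_abs] using (le_tanh_iff_sq_le hr.le (abs_nonneg x)).1 hx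

lemma omegaConeFloor_of_tanh_le_abs {r x : ℝ} (hr : 0 < r) (hx : tanh r ≤ |x|) :
    omegaConeFloor r x = |x| / sinh r := by
  refine max_eq_right ?_
  rw [sqrt_le_left (by positivity), div_pow, sq_abs, le_div_iff₀ (by positivity)]
  simpa only [sq_abs] using (tanh_le_iff_le_sq hr.le (abs_nonneg x)).1 hx

lemma Omega_inter_cone_eq {r : ℝ} (hr : 0 < r) :
    Omega ∩ cone r = {z : ℂ | z.re ∈ Ioc (-(1 / 2)) (1 / 2) ∧ omegaConeFloor r z.re ≤ z.im} := by
  ext z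
  simp only [mem_inter_iff, mem_cone_iff hr.le, Omega, omegaConeFloor, mem_ofPred_eq, mem_Ioc,
    max_le_iff, ← div_le_iff₀ (sinh_pos_iff.2 hr)]
  constructor
  · rintro ⟨⟨him, hnorm, hre⟩, -, hcone⟩
    exact ⟨hre, (Complex.one_le_norm_iff_sqrt_one_sub_re_sq_le_im him.le).1 hnorm, hcone⟩
  · rintro ⟨hre, hsqrt, hcone⟩
    have him : 0 < z.im := (omegaConeFloor_pos hr z.re).trans_le (max_le hsqrt hcone)
    exact ⟨⟨him, (Complex.one_le_norm_iff_sqrt_one_sub_re_sq_le_im him.le).2 hsqrt, hre⟩, him,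
      hcone⟩

lemma integral_one_div_sqrt_one_sub_sq {a b : ℝ} (ha : a ∈ Ioo (-1) 1) (hb : b ∈ Ioo (-1) 1) :
    ∫ x in a..b, 1 / √(1 - x ^ 2) = arcsin b - arcsin a := by
  have hsub : uIcc a b ⊆ Ioo (-1) 1 := ordConnected_Ioo.uIcc_subset ha hb
  refine intervalIntegral.integral_eq_sub_of_hasDerivAt
    (fun x hx => hasDerivAt_arcsin (hsub hx).1.ne' (hsub hx).2.ne)
    (ContinuousOn.intervalIntegrable ?_)
  refine continuousOn_const.div (by fun_prop) fun x hx => (sqrt_pos.2 ?_).ne'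
  have := hsub hx
  nlinarith [this.1, this.2]

lemma arcsin_tanh (r : ℝ) : arcsin (tanh r) = arctan (sinh r) := by
  rw [arctan_eq_arcsin, ← cosh_sq', sqrt_sq (cosh_pos r).le, tanh_eq_sinh_div_cosh]

lemma integral_one_div_omegaConeFloor_Ioc {r : ℝ} (hr : 0 < r) (h : tanh r ≤ 1 / 2) :
    ∫ x in Ioc (-(1 / 2)) (1 / 2), 1 / omegaConeFloor r x =
      2 * arctan (sinh r) + 2 * sinh r * log (1 / (2 * tanh r)) := by
  have ht : 0 < tanh r := by
    rw [tanh_eq_sinh_div_cosh]; exact div_pos (sinh_pos_iff.2 hr) (cosh_pos r)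
  have hint : ∀ a b : ℝ, IntervalIntegrable (fun x => 1 / omegaConeFloor r x) volume a b :=
    (continuous_one_div_omegaConeFloor hr).intervalIntegrable
  have hsymm :
      ∫ x in -(1 / 2)..0, 1 / omegaConeFloor r x = ∫ x in 0..1 / 2, 1 / omegaConeFloor r x := by
    simpa only [omegaConeFloor_neg, neg_zero] using (intervalIntegral.integral_comp_neg
      (a := 0) (b := 1 / 2) fun x => 1 / omegaConeFloor r x).symm
  have hcentral : ∫ x in 0..tanh r, 1 / omegaConeFloor r x = arctan (sinh r) := by
    rw [intervalIntegral.integral_congr (g := fun x => 1 / √(1 - x ^ 2)) fun x hx => ?_,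
      integral_one_div_sqrt_one_sub_sq (by norm_num) ⟨by linarith, tanh_lt_one r⟩, arcsin_zero,
      sub_zero, arcsin_tanh]
    rw [uIcc_of_le ht.le] at hx
    simp only [omegaConeFloor_of_abs_le_tanh hr (abs_le.2 ⟨by linarith [hx.1], hx.2⟩)]
  have houter :
      ∫ x in tanh r..1 / 2, 1 / omegaConeFloor r x = sinh r * log (1 / (2 * tanh r)) := by
    rw [intervalIntegral.integral_congr (g := fun x => sinh r * (1 / x)) fun x hx => ?_,
      intervalIntegral.integral_const_mul, integral_one_div_of_pos ht (by norm_num), div_div]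
    rw [uIcc_of_le h] at hx
    have hx0 : 0 < x := ht.trans_le hx.1
    simp only [omegaConeFloor_of_tanh_le_abs hr ((abs_of_pos hx0).symm ▸ hx.1), abs_of_pos hx0]
    field_simp
  rw [← intervalIntegral.integral_of_le (by norm_num),
    ← intervalIntegral.integral_add_adjacent_intervals (hint _ 0) (hint 0 _), hsymm,
    ← intervalIntegral.integral_add_adjacent_intervals (hint _ (tanh r)) (hint (tanh r) _),
    hcentral, houter]
  ring

theorem area_near_rectangular (r : ℝ) (hr : 0 < r) (h : Real.tanh r ≤ 1 / 2) :
    ∫ z in Omega ∩ cone r, (1 / z.im ^ 2) =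
      2 * Real.arctan (Real.sinh r) + 2 * Real.sinh r * Real.log (1 / (2 * Real.tanh r)) := by
  rw [Omega_inter_cone_eq hr,
    setIntegral_one_div_im_sq_epigraph measurableSet_Ioc (continuous_omegaConeFloor r).measurable
      (fun x _ => omegaConeFloor_pos hr x) (continuous_one_div_omegaConeFloor hr).integrableOn_Ioc,
    integral_one_div_omegaConeFloor_Ioc hr h]
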